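/- Every extreme ray of the polyhedral cone of Markov chains with fixed positive equilibrium P* (i.e., of nonnegative vectors (q_{ij}) satisfying the balance condition) is generated by a simple directed cycle A_{i_1} → ⋯ → A_{i_k} → A_{i_1} with rates q_{i_{j+1} i_j} = 1/p*_{i_j}. -/

import Mathlib

/-!
Weighting the rates by the equilibrium, `f i j = x i j * p*_j`, turns a point `x` of the cone
into a nonnegative circulation without loops. By balance, a state that receives positive flow
also sends positive flow on to another state, so following such edges in the finite state space
closes up a simple cycle `c` in the support of `x`. Subtracting from `x` the largest multiple
`ε • Q₀` of the unit chain `Q₀` of `c` that keeps it in the cone exhibits `x` as the midpoint of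
`2 • (x - ε • Q₀)` and `2 • ε • Q₀`; extremality then forces `x` to be a positive multiple of `Q₀`.
-/

/-- Rate matrix of a simple directed cycle with rates `q_{c(l+1), c l} = 1/p*_{c l}`
(length `k + 2 ≥ 2`, pairwise distinct states), all other rates zero. -/
def IsUnitSimpleCycleChain {n : ℕ} (ps : Fin n → ℝ)
    (Q : Fin n → Fin n → ℝ) : Prop :=
  ∃ (k : ℕ) (c : Fin (k + 2) → Fin n), Function.Injective c ∧
    (∀ l : Fin (k + 2), Q (c (l + 1)) (c l) = 1 / ps (c l)) ∧
    (∀ i j : Fin n, (¬ ∃ l : Fin (k + 2), i = c (l + 1) ∧ j = c l) → Q i j = 0)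

open Finset Function

section Cycles

variable {α : Type*}

theorem Function.exists_mem_periodicPts [Finite α] [Nonempty α] (f : α → α) :
    ∃ x, x ∈ periodicPts f := by
  obtain ⟨x⟩ := ‹Nonempty α›
  obtain ⟨m, n, hmn, hfmn⟩ := Finite.exists_ne_map_eq_of_infinite fun n : ℕ ↦ f^[n] x
  wlog hlt : m < n generalizing m n
  · exact this n m hmn.symm hfmn.symm (by omega)
  refine ⟨f^[m] x, mk_mem_periodicPts (n := n - m) (by omega) ?_⟩
  rw [IsPeriodicPt, IsFixedPt, ← iterate_add_apply, Nat.sub_add_cancel hlt.le]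
  exact hfmn.symm

theorem exists_injective_cycle_of_ne [Finite α] [Nonempty α] {g : α → α} (hg : ∀ x, g x ≠ x) :
    ∃ (k : ℕ) (c : Fin (k + 2) → α), Injective c ∧ ∀ l, c (l + 1) = g (c l) := by
  obtain ⟨x, hx⟩ := exists_mem_periodicPts g
  have hpos := minimalPeriod_pos_of_mem_periodicPts hx
  have hne_one : minimalPeriod g x ≠ 1 := fun h ↦ hg x (minimalPeriod_eq_one_iff_isFixedPt.1 h)
  obtain ⟨k, hk⟩ : ∃ k, minimalPeriod g x = k + 2 := ⟨minimalPeriod g x - 2, by omega⟩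
  refine ⟨k, fun l ↦ g^[l] x, fun l l' h ↦ Fin.ext ?_, fun l ↦ ?_⟩
  · exact iterate_injOn_Iio_minimalPeriod (by simp [hk]) (by simp [hk]) h
  · simp only [Fin.val_add, Fin.val_one, ← hk, iterate_mod_minimalPeriod_eq, iterate_succ_apply']

variable {M : Type*} [AddCommMonoid M] [LinearOrder M] [IsOrderedCancelAddMonoid M]

theorem exists_pos_in_of_pos_out [Fintype α] {f : α → α → M} (hnn : ∀ i j, 0 ≤ f i j)
    (hbal : ∀ i, ∑ j, f i j = ∑ j, f j i) {v u : α} (hvu : 0 < f v u) : ∃ w, 0 < f w v := by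
  by_contra! h
  have hout : 0 < ∑ j, f v j := sum_pos' (fun j _ ↦ hnn v j) ⟨u, mem_univ u, hvu⟩
  exact (hout.trans_le ((hbal v).trans_le (sum_nonpos fun j _ ↦ h j))).false

theorem exists_pos_cycle_of_balanced [Fintype α] {f : α → α → M} (hnn : ∀ i j, 0 ≤ f i j)
    (hdiag : ∀ i, f i i = 0) (hbal : ∀ i, ∑ j, f i j = ∑ j, f j i) (hf : f ≠ 0) :
    ∃ (k : ℕ) (c : Fin (k + 2) → α), Injective c ∧ ∀ l, 0 < f (c (l + 1)) (c l) := by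
  let S := {v // ∃ u, 0 < f v u}
  have : Nonempty S := by
    by_contra! hS
    exact hf (funext₂ fun v u ↦ (hnn v u).antisymm' (not_lt.1 fun h ↦ hS.false ⟨v, u, h⟩))
  choose w hw using fun v : S ↦ exists_pos_in_of_pos_out hnn hbal v.2.choose_spec
  let g : S → S := fun v ↦ ⟨w v, v, hw v⟩
  have hg : ∀ v, g v ≠ v := fun v h ↦ by
    have hwv : w v = v := congrArg Subtype.val h
    simpa [hwv, hdiag] using hw v
  obtain ⟨k, c, hc, hstep⟩ := exists_injective_cycle_of_ne hg
  exact ⟨k, Subtype.val ∘ c, Subtype.val_injective.comp hc, fun l ↦ by simp [hstep, g, hw]⟩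

end Cycles

section MarkovCone

variable {ι : Type*} [Fintype ι] [DecidableEq ι] {ps : ι → ℝ} {q r : ι → ι → ℝ}

def markovCone (ps : ι → ℝ) : Set (ι → ι → ℝ) :=
  {q | (∀ i j, i ≠ j → 0 ≤ q i j) ∧ (∀ i, q i i = 0) ∧
    ∀ i, ∑ j ∈ univ.erase i, q i j * ps j = (∑ j ∈ univ.erase i, q j i) * ps i}

theorem mem_markovCone_iff : q ∈ markovCone ps ↔
    (∀ i j, 0 ≤ q i j) ∧ (∀ i, q i i = 0) ∧ ∀ i, ∑ j, q i j * ps j = (∑ j, q j i) * ps i := by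
  have erase_eq (hdiag : ∀ i, q i i = 0) (i : ι) :
      (∑ j ∈ univ.erase i, q i j * ps j = (∑ j ∈ univ.erase i, q j i) * ps i) ↔
        ∑ j, q i j * ps j = (∑ j, q j i) * ps i := by
    rw [sum_erase _ (by simp [hdiag]), sum_erase (f := (q · i)) _ (hdiag i)]
  refine ⟨fun ⟨hnn, hdiag, hbal⟩ ↦ ⟨fun i j ↦ ?_, hdiag, fun i ↦ (erase_eq hdiag i).1 (hbal i)⟩,
    fun ⟨hnn, hdiag, hbal⟩ ↦ ⟨fun i j _ ↦ hnn i j, hdiag, fun i ↦ (erase_eq hdiag i).2 (hbal i)⟩⟩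
  rcases eq_or_ne i j with rfl | hij
  exacts [(hdiag i).ge, hnn i j hij]

theorem smul_mem_markovCone {t : ℝ} (ht : 0 ≤ t) (hq : q ∈ markovCone ps) :
    t • q ∈ markovCone ps := by
  obtain ⟨hnn, hdiag, hbal⟩ := mem_markovCone_iff.1 hq
  refine mem_markovCone_iff.2 ⟨fun i j ↦ mul_nonneg ht (hnn i j), fun i ↦ by simp [hdiag],
    fun i ↦ ?_⟩
  simp only [Pi.smul_apply, smul_eq_mul, mul_assoc, ← mul_sum, hbal]

theorem sub_mem_markovCone (hq : q ∈ markovCone ps) (hr : r ∈ markovCone ps) (hrq : r ≤ q) :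
    q - r ∈ markovCone ps := by
  obtain ⟨-, hqdiag, hqbal⟩ := mem_markovCone_iff.1 hq
  obtain ⟨-, hrdiag, hrbal⟩ := mem_markovCone_iff.1 hr
  refine mem_markovCone_iff.2 ⟨fun i j ↦ sub_nonneg.2 (hrq i j), fun i ↦ by simp [hqdiag, hrdiag],
    fun i ↦ ?_⟩
  simp only [Pi.sub_apply, sub_mul, sum_sub_distrib, hqbal, hrbal]

end MarkovCone

section CycleChain

variable {ι : Type*} [DecidableEq ι] {ps : ι → ℝ} {k : ℕ} {c : Fin (k + 2) → ι}

noncomputable def cycleChain (ps : ι → ℝ) (c : Fin (k + 2) → ι) (i j : ι) : ℝ :=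
  if ∃ l, i = c (l + 1) ∧ j = c l then 1 / ps j else 0

theorem cycleChain_apply_succ (l : Fin (k + 2)) :
    cycleChain ps c (c (l + 1)) (c l) = 1 / ps (c l) :=
  if_pos ⟨l, rfl, rfl⟩

theorem cycleChain_of_not_edge {i j : ι} (h : ¬ ∃ l, i = c (l + 1) ∧ j = c l) :
    cycleChain ps c i j = 0 :=
  if_neg h

theorem cycleChain_apply_left (hc : Injective c) (m : Fin (k + 2)) (j : ι) :
    cycleChain ps c (c m) j = if j = c (m - 1) then 1 / ps j else 0 := by
  simp only [cycleChain, hc.eq_iff]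
  congr 1
  exact propext ⟨fun ⟨l, hl, hj⟩ ↦ by rwa [hl, add_sub_cancel_right],
    fun hj ↦ ⟨m - 1, (sub_add_cancel m 1).symm, hj⟩⟩

theorem cycleChain_apply_right (hc : Injective c) (i : ι) (m : Fin (k + 2)) :
    cycleChain ps c i (c m) = if i = c (m + 1) then 1 / ps (c m) else 0 := by
  simp only [cycleChain, hc.eq_iff]
  by_cases hi : i = c (m + 1)
  · exact if_pos ⟨m, hi, rfl⟩ |>.trans (if_pos hi).symm
  · refine (if_neg ?_).trans (if_neg hi).symm
    rintro ⟨l, rfl, rfl⟩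
    exact hi rfl

theorem cycleChain_eq_zero_left {i : ι} (hi : i ∉ Set.range c) (j : ι) : cycleChain ps c i j = 0 :=
  cycleChain_of_not_edge fun ⟨l, hl, _⟩ ↦ hi ⟨l + 1, hl.symm⟩

theorem cycleChain_eq_zero_right {j : ι} (hj : j ∉ Set.range c) (i : ι) : cycleChain ps c i j = 0 :=
  cycleChain_of_not_edge fun ⟨l, _, hl⟩ ↦ hj ⟨l, hl.symm⟩

theorem cycleChain_mem_markovCone [Fintype ι] (hps : ∀ i, 0 < ps i) (hc : Injective c) :
    cycleChain ps c ∈ markovCone ps := by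
  refine mem_markovCone_iff.2 ⟨fun i j ↦ ?_, fun i ↦ cycleChain_of_not_edge ?_, fun i ↦ ?_⟩
  · unfold cycleChain
    split_ifs
    exacts [(one_div_pos.2 (hps j)).le, le_rfl]
  · rintro ⟨l, hl, hl'⟩
    simpa using hc (hl.symm.trans hl')
  · by_cases hi : i ∈ Set.range c
    · obtain ⟨m, rfl⟩ := hi
      simp [cycleChain_apply_left hc, cycleChain_apply_right hc, (hps _).ne']
    · simp [cycleChain_eq_zero_left hi, cycleChain_eq_zero_right hi]

theorem cycleChain_ne_zero (hps : ∀ i, 0 < ps i) : cycleChain ps c ≠ 0 := fun h ↦ by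
  have h₀ := congrFun₂ h (c (0 + 1)) (c 0)
  rw [cycleChain_apply_succ] at h₀
  simp [(hps _).ne'] at h₀

/-- One may take `ε` to be the least flow `x (c (l + 1)) (c l) * ps (c l)` along `c`. -/
theorem exists_pos_smul_cycleChain_le (hps : ∀ i, 0 < ps i) {x : ι → ι → ℝ}
    (hnn : ∀ i j, 0 ≤ x i j) (hpos : ∀ l, 0 < x (c (l + 1)) (c l)) :
    ∃ ε : ℝ, 0 < ε ∧ ε • cycleChain ps c ≤ x := by
  obtain ⟨l₀, hl₀⟩ := Finite.exists_min fun l ↦ x (c (l + 1)) (c l) * ps (c l)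
  refine ⟨x (c (l₀ + 1)) (c l₀) * ps (c l₀), mul_pos (hpos l₀) (hps _), fun i j ↦ ?_⟩
  by_cases hij : ∃ l, i = c (l + 1) ∧ j = c l
  · obtain ⟨l, rfl, rfl⟩ := hij
    rw [Pi.smul_apply, Pi.smul_apply, cycleChain_apply_succ, smul_eq_mul, mul_one_div,
      div_le_iff₀ (hps _)]
    exact hl₀ l
  · simpa [cycleChain_of_not_edge hij] using hnn i j

end CycleChain

theorem isUnitSimpleCycleChain_cycleChain {n k : ℕ} {ps : Fin n → ℝ} {c : Fin (k + 2) → Fin n}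
    (hc : Injective c) : IsUnitSimpleCycleChain ps (cycleChain ps c) :=
  ⟨k, c, hc, cycleChain_apply_succ, fun _ _ ↦ cycleChain_of_not_edge⟩

/-- `x` is the midpoint of `2 • (x - z)` and `2 • z`. -/
theorem exists_pos_smul_eq_of_extreme {E : Type*} [AddCommGroup E] [Module ℝ E] {C : Set E}
    {x z : E}
    (hext : ∀ u ∈ {v | ∃ c : ℝ, 0 ≤ c ∧ v = c • x}, ∀ y ∈ C, ∀ z ∈ C,
      u = (2⁻¹ : ℝ) • (y + z) →
        y ∈ {v | ∃ c : ℝ, 0 ≤ c ∧ v = c • x} ∧ z ∈ {v | ∃ c : ℝ, 0 ≤ c ∧ v = c • x})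
    (hC : ∀ y ∈ C, (2 : ℝ) • y ∈ C) (hz : z ∈ C) (hxz : x - z ∈ C) (hz0 : z ≠ 0) :
    ∃ s : ℝ, 0 < s ∧ x = s • z := by
  obtain ⟨-, t, ht, hzt⟩ := hext x ⟨1, zero_le_one, (one_smul ℝ x).symm⟩ _ (hC _ hxz) _ (hC _ hz)
    (by module)
  have ht0 : t ≠ 0 := by rintro rfl; simp_all
  refine ⟨2 * t⁻¹, by positivity, ?_⟩
  rw [mul_comm, mul_smul, hzt, inv_smul_smul₀ ht0]

/-- Every extreme ray of the polyhedral cone of Markov chains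
with fixed positive equilibrium `P*` is generated by a simple directed cycle
with rates `1/p*_{i_j}`. -/
theorem extreme_rays_are_simple_cycles
    (n : ℕ) (ps : Fin n → ℝ) (hps : ∀ i, 0 < ps i) :
    let C : Set (Fin n → Fin n → ℝ) :=
      {q | (∀ i j, i ≠ j → 0 ≤ q i j) ∧ (∀ i, q i i = 0) ∧
        ∀ i, ∑ j ∈ Finset.univ.erase i, q i j * ps j
          = (∑ j ∈ Finset.univ.erase i, q j i) * ps i}
    ∀ x : Fin n → Fin n → ℝ, x ∈ C → x ≠ 0 →
      -- the ray generated by `x` is extreme: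
      (∀ u ∈ {v | ∃ c : ℝ, 0 ≤ c ∧ v = c • x}, ∀ y ∈ C, ∀ z ∈ C,
        u = (2⁻¹ : ℝ) • (y + z) →
          y ∈ {v | ∃ c : ℝ, 0 ≤ c ∧ v = c • x} ∧
          z ∈ {v | ∃ c : ℝ, 0 ≤ c ∧ v = c • x}) →
      ∃ Q₀ : Fin n → Fin n → ℝ, IsUnitSimpleCycleChain ps Q₀ ∧
        ∃ c : ℝ, 0 < c ∧ x = c • Q₀ := by
  intro C x hxC hx0 hext
  change x ∈ markovCone ps at hxC
  obtain ⟨hnn, hdiag, hbal⟩ := mem_markovCone_iff.1 hxC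
  have hflow : (fun i j ↦ x i j * ps j) ≠ 0 := fun h ↦ hx0 <| funext₂ fun i j ↦ by
    simpa [(hps j).ne'] using congrFun₂ h i j
  obtain ⟨k, c, hc, hcyc⟩ := exists_pos_cycle_of_balanced
    (fun i j ↦ mul_nonneg (hnn i j) (hps j).le) (fun i ↦ by simp [hdiag])
    (fun i ↦ (hbal i).trans (sum_mul _ _ _)) hflow
  obtain ⟨ε, hε, hle⟩ :=
    exists_pos_smul_cycleChain_le hps hnn fun l ↦ pos_of_mul_pos_left (hcyc l) (hps _).le
  have hzC : ε • cycleChain ps c ∈ markovCone ps :=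
    smul_mem_markovCone hε.le (cycleChain_mem_markovCone hps hc)
  obtain ⟨s, hs, hxs⟩ := exists_pos_smul_eq_of_extreme hext
    (fun y ↦ smul_mem_markovCone zero_le_two) hzC (sub_mem_markovCone hxC hzC hle)
    (smul_ne_zero hε.ne' (cycleChain_ne_zero hps))
  exact ⟨cycleChain ps c, isUnitSimpleCycleChain_cycleChain hc, s * ε, mul_pos hs hε,
    by rw [hxs, smul_smul]⟩
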